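/- (i) If S^c is a right extremal column staircase in D with c at most the maximal column height of D, then b(S^c) is right extremal in D relative to ℓ(D). (ii) The remaining right extremal boxes of D are exactly the boxes of the c^i-lower part C_i^L of each right extremal column C_i, except possibly the top box C_i ∩ R_{c^i + 1} of C_i^L, which fails to be right extremal exactly when there exists a right extremal column staircase S^{c^i} of depth c^i in D (necessarily to the right of C_i). -/

import Mathlib

open scoped Classical

/-- height of column `j` of the diagram (columns numbered from 1). -/
def hgt (c : List ℕ) (j : ℕ) : ℕ := c.getD (j - 1) 0

/-- number of boxes in the columns strictly to the left of column `j`. -/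
def off (c : List ℕ) (j : ℕ) : ℕ := (c.take (j - 1)).sum

/-- `(i, j)` (row `i`, column `j`) is a box of the diagram `D`. -/
def IsBox (c : List ℕ) (i j : ℕ) : Prop :=
  1 ≤ j ∧ j ≤ c.length ∧ 1 ≤ i ∧ i ≤ hgt c j

/-- the entry of the box `(i, j)` in the tableau `T`. -/
def Tentry (c : List ℕ) (i j : ℕ) : ℕ := off c j + i

/-- the column of the box of `D` carrying entry `m` in `T`. -/
noncomputable def colOf (c : List ℕ) (m : ℕ) : ℕ := sInf {j | m ≤ (c.take j).sum}

/-- the row of the box of `D` carrying entry `m` in `T`. -/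
noncomputable def rowOf (c : List ℕ) (m : ℕ) : ℕ := m - off c (colOf c m)

/-- the total order `≼` on entries: increasing down columns, then from right to left. -/
def ple (c : List ℕ) (a b : ℕ) : Prop :=
  colOf c b < colOf c a ∨ (colOf c a = colOf c b ∧ a ≤ b)

/-- the strict version of `≼`. -/
def plt (c : List ℕ) (a b : ℕ) : Prop :=
  colOf c b < colOf c a ∨ (colOf c a = colOf c b ∧ a < b)

/-- column `j` has a left neighbour in `D`. -/
def HasLeftNb (c : List ℕ) (j : ℕ) : Prop :=
  ∃ i, 1 ≤ i ∧ i < j ∧ hgt c i = hgt c j ∧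
    ∀ i', i < i' → i' < j → hgt c i' ≠ hgt c j

/-- the `j`-th column of the tableau `T`, rows to optional entries. -/
def Tcol (c : List ℕ) (j : ℕ) : ℕ → Option ℕ := fun i =>
  if 1 ≤ i ∧ i ≤ hgt c j then some (Tentry c i j) else none

/-- one step of the propagation rule building `T(∞)`: the entry (if any) in row `t`
of column `j - 1` of `T(∞)` (given by `prev`) is propagated into the partially
built column `j` (given by `cur`). -/
noncomputable def propStep (c : List ℕ) (j : ℕ) (prev : ℕ → Option ℕ)
    (cur : ℕ → Option ℕ) (t : ℕ) : ℕ → Option ℕ :=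
  match prev t with
  | none => cur
  | some l =>
    if hgt c j = t then
      if HasLeftNb c j ∧ cur (t + 1) = none then
        Function.update cur (t + 1) (some l)
      else cur
    else
      if cur t = none then Function.update cur t (some l) else cur

/-- the `j`-th column of the composition tableau `T(∞)`. -/
noncomputable def TinfCol (c : List ℕ) : ℕ → ℕ → Option ℕ
  | 0 => fun _ => none
  | 1 => Tcol c 1
  | j + 2 =>
      (List.range (c.sum + 2)).foldl
        (propStep c (j + 2) (TinfCol c (j + 1))) (Tcol c (j + 2))

/-- labels of lines: `1` or `∗`. -/
inductive Lab : Type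
  | one : Lab
  | star : Lab
deriving DecidableEq

/-- maximal height among the columns `1, …, j - 1`. -/
def maxHgt (c : List ℕ) (j : ℕ) : ℕ := (c.take (j - 1)).foldr max 0

/-- the maximal column height of the diagram `D`. -/
def maxH (c : List ℕ) : ℕ := c.foldr max 0

/-- `LineB c a i j lab` : the line family `ℓ(D)` contains a line labelled `lab`
whose left end-point is the box of `D` carrying entry `a` in `T` and whose right
end-point is the box `(i, j)` (row `i` of column `C_j`). -/
def LineB (c : List ℕ) (a i j : ℕ) (lab : Lab) : Prop :=
  2 ≤ j ∧ j ≤ c.length ∧ 1 ≤ i ∧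
    (match lab with
     | Lab.one =>
         (maxHgt c j < hgt c j ∧ i ≤ maxHgt c j + 1 ∧ TinfCol c (j - 1) i = some a)
       ∨ (hgt c j ≤ maxHgt c j ∧ i + 1 ≤ hgt c j ∧ TinfCol c (j - 1) i = some a)
       ∨ (hgt c j ≤ maxHgt c j ∧ i = hgt c j ∧
           ¬(∃ j', 1 ≤ j' ∧ j' < j ∧ hgt c j' = hgt c j) ∧
           TinfCol c (j - 1) i = some a)
       ∨ (hgt c j ≤ maxHgt c j ∧ i = hgt c j ∧
           (∃ j', 1 ≤ j' ∧ j' < j ∧ hgt c j' = hgt c j) ∧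
           TinfCol c (j - 1) (i + 1) = some a)
     | Lab.star =>
         hgt c j ≤ maxHgt c j ∧ i = hgt c j ∧
           (∃ j', 1 ≤ j' ∧ j' < j ∧ hgt c j' = hgt c j) ∧
           TinfCol c (j - 1) i = some a)

/-- `LineE c a b lab` : `ℓ(D)` contains a line labelled `lab` joining the box of `D`
carrying entry `a` in `T` (on the left) to the box carrying entry `b` (on the right). -/
def LineE (c : List ℕ) (a b : ℕ) (lab : Lab) : Prop :=
  ∃ i j, LineB c a i j lab ∧ b = Tentry c i j

/-- the box `(i, j)` of `D` is right extremal relative to `ℓ(D)`. -/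
def RExt (c : List ℕ) (i j : ℕ) : Prop :=
  IsBox c i j ∧ ∀ i' j', ¬ LineB c (Tentry c i j) i' j' Lab.one

/-- `c` is a composition of `n`. -/
def IsComposition (c : List ℕ) (n : ℕ) : Prop :=
  c.sum = n ∧ ∀ x ∈ c, 0 < x

/-- a column staircase `S^cc_u` (without the maximality requirement): `col j` is the
index of the column `C'_{i_j}` of height `j`, for `j ∈ [u, cc]`. -/
def IsStair (c : List ℕ) (u cc : ℕ) (col : ℕ → ℕ) : Prop :=
  1 ≤ u ∧ u ≤ cc ∧
  (∀ j, u ≤ j → j ≤ cc →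
     1 ≤ col j ∧ col j ≤ c.length ∧ hgt c (col j) = j ∧ HasLeftNb c (col j)) ∧
  (∀ j, u ≤ j → j < cc → col j < col (j + 1) ∧
     ∀ j', col j < j' → j' < col (j + 1) → hgt c j' < j)

/-- a column staircase `S^cc_u`: a maximal family as above. -/
def IsMaxStair (c : List ℕ) (u cc : ℕ) (col : ℕ → ℕ) : Prop :=
  IsStair c u cc col ∧
  ¬ ∃ u' cc' col', IsStair c u' cc' col' ∧ u' ≤ u ∧ cc ≤ cc' ∧ (u' < u ∨ cc < cc') ∧
      ∀ j, u ≤ j → j ≤ cc → col' j = col j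

/-- the column containing the box `b(S)`, where `cu` is the index of the lowest
(leftmost) column of the staircase `S` of height `u`: the rightmost column of
height `≥ u` strictly to the left of `cu`. -/
noncomputable def stairBoxCol (c : List ℕ) (u cu : ℕ) : ℕ :=
  sSup {j | j < cu ∧ u ≤ hgt c j}

/-- a right extremal column staircase of height `u` and depth `cc`. -/
def RExtStair (c : List ℕ) (u cc : ℕ) (col : ℕ → ℕ) : Prop :=
  IsMaxStair c u cc col ∧ ∀ j', col cc < j' → j' ≤ c.length → hgt c j' < cc

/-- `c^j`: the maximal height of the columns strictly to the right of column `j`. -/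
def cAfter (c : List ℕ) (j : ℕ) : ℕ := (c.drop j).foldr max 0

/-!
Follow the entry of a single box `(i, j)` through `T(∞)`. Passing from one column to the next,
an entry in row `r` moves down to row `r + 1` when the new column has height `r` and a left
neighbour, keeps its row when the new column is low enough, and in every other case is the left
end of a line labelled `1`. Hence `(i, j)` is right extremal iff its entry reaches the last
column along such moves, and the theorem classifies these paths. A path that never moves down
runs above columns of height `< i`, those of height `i - 1` having no left neighbour: this is
the lower-part condition, and a column of height `i - 1 = c^j` with a left neighbour is exactly
the top of a right extremal staircase of depth `c^j`. A path that does move down climbs a column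
staircase, which turns out to be maximal and right extremal with `b(S) = (i, j)`. Conversely,
the entry of `b(S)` climbs its right extremal staircase all the way to the last column.
-/

section

variable {c : List ℕ}

lemma hgt_mem {j : ℕ} (h1 : 1 ≤ j) (h2 : j ≤ c.length) : hgt c j ∈ c := by
  rw [hgt, List.getD_eq_getElem c 0 (by omega)]
  exact List.getElem_mem _

lemma hgt_of_length_lt {j : ℕ} (h : c.length < j) : hgt c j = 0 :=
  List.getD_eq_default c 0 (by omega)

lemma hgt_pos {n : ℕ} (hc : IsComposition c n) {j : ℕ} (h1 : 1 ≤ j) (h2 : j ≤ c.length) :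
    0 < hgt c j :=
  hc.2 _ (hgt_mem h1 h2)

lemma le_length_of_hgt_pos {j : ℕ} (h : 0 < hgt c j) : j ≤ c.length := by
  by_contra hj
  rw [hgt_of_length_lt (by omega)] at h
  exact h.false

lemma hgt_le_sum (j : ℕ) : hgt c j ≤ c.sum := by
  by_cases h : j - 1 < c.length
  · rw [hgt, List.getD_eq_getElem c 0 h]
    exact List.le_sum_of_mem (List.getElem_mem _)
  · rw [hgt, List.getD_eq_default c 0 (by omega)]
    exact Nat.zero_le _

lemma sum_take_mono {a b : ℕ} (h : a ≤ b) : (c.take a).sum ≤ (c.take b).sum :=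
  (List.take_sublist_take_left h).sum_le_sum fun _ _ => Nat.zero_le _

lemma sum_take_eq_off_add_hgt {j : ℕ} (hj : 1 ≤ j) : (c.take j).sum = off c j + hgt c j := by
  obtain ⟨m, rfl⟩ : ∃ m, j = m + 1 := ⟨j - 1, by omega⟩
  rw [off, hgt, Nat.add_sub_cancel]
  by_cases hm : m < c.length
  · rw [List.sum_take_succ _ _ hm, List.getD_eq_getElem c 0 hm]
  · rw [List.getD_eq_default c 0 (by omega), List.take_of_length_le (by omega),
      List.take_of_length_le (by omega), add_zero]

lemma exists_last_of_le {P : ℕ → Prop} {a b : ℕ} (ha : P a) (hab : a ≤ b) :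
    ∃ m, a ≤ m ∧ m ≤ b ∧ P m ∧ ∀ k, m < k → k ≤ b → ¬ P k := by
  classical
  exact ⟨Nat.findGreatest P b, Nat.le_findGreatest hab ha, Nat.findGreatest_le b,
    Nat.findGreatest_spec hab ha, fun k hk hkb => Nat.findGreatest_is_greatest hk hkb⟩

lemma hasLeftNb_iff_exists {j : ℕ} :
    HasLeftNb c j ↔ ∃ j', 1 ≤ j' ∧ j' < j ∧ hgt c j' = hgt c j := by
  refine ⟨fun ⟨i, h1, h2, h3, _⟩ => ⟨i, h1, h2, h3⟩, fun ⟨i, h1, h2, h3⟩ => ?_⟩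
  obtain ⟨m, him, hmj, hm, hlast⟩ :=
    exists_last_of_le (P := fun i => hgt c i = hgt c j) h3 (show i ≤ j - 1 by omega)
  exact ⟨m, by omega, by omega, hm, fun k hk hkj => hlast k hk (by omega)⟩

lemma HasLeftNb.of_le {p p' : ℕ} (hL : HasLeftNb c p) (hpp' : p ≤ p')
    (hh : hgt c p' = hgt c p) : HasLeftNb c p' := by
  obtain ⟨k, hk1, hkp, hkh⟩ := hasLeftNb_iff_exists.1 hL
  exact hasLeftNb_iff_exists.2 ⟨k, hk1, by omega, by rw [hkh, hh]⟩

lemma hgt_le_maxHgt {p j : ℕ} (h1 : 1 ≤ p) (h2 : p < j) : hgt c p ≤ maxHgt c j := by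
  by_cases hp : p ≤ c.length
  · refine List.le_max_of_le' 0 (x := hgt c p) ?_ le_rfl
    have : hgt c p = (c.take (j - 1))[p - 1]'(by rw [List.length_take]; omega) := by
      rw [hgt, List.getD_eq_getElem c 0 (by omega), List.getElem_take]
    rw [this]
    exact List.getElem_mem _
  · rw [hgt_of_length_lt (by omega)]
    exact Nat.zero_le _

lemma maxHgt_mono {a b : ℕ} (h : a ≤ b) : maxHgt c a ≤ maxHgt c b :=
  List.max_le_of_forall_le _ _ fun _ hx =>
    List.le_max_of_le' 0 ((List.take_subset_take_left _ (by omega)) hx) le_rfl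

lemma hgt_le_cAfter {j p : ℕ} (h : j < p) : hgt c p ≤ cAfter c j := by
  by_cases hp : p ≤ c.length
  · refine List.le_max_of_le' 0 (x := hgt c p) ?_ le_rfl
    have : hgt c p = (c.drop j)[p - 1 - j]'(by rw [List.length_drop]; omega) := by
      rw [hgt, List.getD_eq_getElem c 0 (by omega), List.getElem_drop]
      congr 1
      omega
    rw [this]
    exact List.getElem_mem _
  · rw [hgt_of_length_lt (by omega)]
    exact Nat.zero_le _

lemma cAfter_le {j K : ℕ} (h : ∀ p, j < p → p ≤ c.length → hgt c p ≤ K) :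
    cAfter c j ≤ K := by
  refine List.max_le_of_forall_le _ _ fun x hx => ?_
  obtain ⟨t, ht, rfl⟩ := List.getElem_of_mem hx
  rw [List.length_drop] at ht
  have : (c.drop j)[t] = hgt c (j + t + 1) := by
    rw [hgt, List.getD_eq_getElem c 0 (by omega), List.getElem_drop]
    rfl
  rw [this]
  exact h _ (by omega) (by omega)

-- The entry of row `hgt c j` of the previous column, when moved down, occupies row `hgt c j + 1`
-- before the entry of that row could.
noncomputable def nextCol (c : List ℕ) (j : ℕ) (prev : ℕ → Option ℕ) (r : ℕ) :
    Option ℕ :=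
  if 1 ≤ r ∧ r ≤ hgt c j then some (Tentry c r j)
  else if r = hgt c j + 1 ∧ HasLeftNb c j ∧ prev (hgt c j) ≠ none then prev (hgt c j)
  else prev r

-- The fold defining `TinfCol` after the rows `t < T` of the previous column have been processed.
noncomputable def partialCol (c : List ℕ) (j : ℕ) (prev : ℕ → Option ℕ) (T r : ℕ) :
    Option ℕ :=
  if 1 ≤ r ∧ r ≤ hgt c j then some (Tentry c r j)
  else if r = hgt c j + 1 ∧ HasLeftNb c j ∧ prev (hgt c j) ≠ none ∧ hgt c j < T then
    prev (hgt c j)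
  else if r < T then prev r else none

lemma propStep_partialCol (j : ℕ) {prev : ℕ → Option ℕ} (h0 : prev 0 = none) (T : ℕ) :
    propStep c j prev (partialCol c j prev T) T = partialCol c j prev (T + 1) := by
  funext r
  rcases hp : prev T with _ | l
  · simp only [propStep, hp]
    unfold partialCol
    split_ifs <;> grind
  · simp only [propStep, hp]
    unfold partialCol
    split_ifs <;> simp only [Function.update_apply] <;> split_ifs <;> grind

lemma foldl_propStep (j : ℕ) {prev : ℕ → Option ℕ} (h0 : prev 0 = none) (N : ℕ) :
    (List.range N).foldl (propStep c j prev) (Tcol c j) = partialCol c j prev N := by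
  induction N with
  | zero =>
    funext r
    simp [partialCol, Tcol]
  | succ N ih =>
    rw [List.range_succ, List.foldl_append, List.foldl_cons, List.foldl_nil, ih,
      propStep_partialCol j h0]

lemma tinfCol_add_two (j : ℕ) (h0 : TinfCol c (j + 1) 0 = none) :
    TinfCol c (j + 2) = partialCol c (j + 2) (TinfCol c (j + 1)) (c.sum + 2) :=
  foldl_propStep _ h0 _

lemma tinfCol_row_zero : ∀ m, TinfCol c m 0 = none
  | 0 => rfl
  | 1 => by simp [TinfCol, Tcol]
  | j + 2 => by
    rw [tinfCol_add_two j (tinfCol_row_zero (j + 1))]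
    simp [partialCol, tinfCol_row_zero (j + 1)]

lemma tinfCol_of_sum_add_two_le {r : ℕ} (hr : c.sum + 2 ≤ r) : ∀ m, TinfCol c m r = none
  | 0 => rfl
  | 1 => by
    have := hgt_le_sum (c := c) 1
    simp only [TinfCol, Tcol]
    grind
  | j + 2 => by
    have := hgt_le_sum (c := c) (j + 2)
    rw [tinfCol_add_two j (tinfCol_row_zero (j + 1))]
    simp only [partialCol]
    grind

lemma tinfCol_eq_nextCol {j : ℕ} (hj : 1 ≤ j) :
    TinfCol c j = nextCol c j (TinfCol c (j - 1)) := by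
  funext r
  obtain rfl | ⟨j, rfl⟩ : j = 1 ∨ ∃ j', j = j' + 2 := by
    rcases j with _ | _ | j <;> simp_all
  · simp [TinfCol, Tcol, nextCol]
  · have := hgt_le_sum (c := c) (j + 2)
    have := tinfCol_of_sum_add_two_le (c := c) (r := r)
    rw [tinfCol_add_two j (tinfCol_row_zero (j + 1))]
    simp only [partialCol, nextCol]
    grind

lemma tinfCol_of_le_hgt {j r : ℕ} (hj : 1 ≤ j) (h1 : 1 ≤ r) (h2 : r ≤ hgt c j) :
    TinfCol c j r = some (Tentry c r j) := by
  rw [tinfCol_eq_nextCol hj, nextCol, if_pos ⟨h1, h2⟩]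

lemma tinfCol_le_sum_take : ∀ {m r v : ℕ}, TinfCol c m r = some v → v ≤ (c.take m).sum
  | 0, _, _, h => nomatch h
  | m + 1, r, v, h => by
    have ih := @tinfCol_le_sum_take m
    have hsum := sum_take_eq_off_add_hgt (c := c) (j := m + 1) (by omega)
    have hmono := sum_take_mono (c := c) (Nat.le_succ m)
    rw [tinfCol_eq_nextCol (by omega), nextCol, Nat.add_sub_cancel] at h
    split_ifs at h with h1 h2
    · cases h
      rw [Tentry, off, Nat.add_sub_cancel] at *
      omega
    · exact (ih h).trans hmono
    · exact (ih h).trans hmono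

lemma le_col_of_tinfCol_eq_tentry {i j m r : ℕ} (hi : 1 ≤ i)
    (h : TinfCol c m r = some (Tentry c i j)) : j ≤ m := by
  by_contra hm
  have := tinfCol_le_sum_take h
  have := sum_take_mono (c := c) (show m ≤ j - 1 by omega)
  rw [Tentry, off] at *
  omega

lemma tinfCol_row_le_maxHgt :
    ∀ {m r v : ℕ}, TinfCol c m r = some v → r ≤ maxHgt c (m + 1) + 1
  | 0, _, _, h => nomatch h
  | m + 1, r, v, h => by
    have ih := @tinfCol_row_le_maxHgt m r
    have hmono := maxHgt_mono (c := c) (show m + 1 ≤ m + 1 + 1 by omega)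
    have hh := hgt_le_maxHgt (c := c) (show 1 ≤ m + 1 by omega) (show m + 1 < m + 1 + 1 by omega)
    rw [tinfCol_eq_nextCol (by omega), nextCol, Nat.add_sub_cancel] at h
    split_ifs at h with h1 h2
    · omega
    · omega
    · have := ih h
      omega

lemma tinfCol_row_unique :
    ∀ {m r r' v : ℕ}, TinfCol c m r = some v → TinfCol c m r' = some v → r = r'
  | 0, _, _, _, h, _ => nomatch h
  | m + 1, r, r', v, h, h' => by
    have ih := @tinfCol_row_unique m
    have hlt : ∀ {s}, TinfCol c m s = some v → v ≤ off c (m + 1) := fun hs => by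
      rw [off, Nat.add_sub_cancel]
      exact tinfCol_le_sum_take hs
    rw [tinfCol_eq_nextCol (by omega), nextCol, Nat.add_sub_cancel] at h h'
    have h0 := tinfCol_row_zero (c := c) m
    split_ifs at h h' <;> grind [Tentry]

-- An entry in row `r` of column `p - 1` either keeps its row through column `p` (`Passes`) or
-- moves down to row `r + 1`; otherwise it is the left end of a line labelled `1`, even in row
-- `hgt c p + 1` of a column with a left neighbour, where `T(∞)` may still carry it on.
def Passes (c : List ℕ) (p r : ℕ) : Prop :=
  hgt c p + 2 ≤ r ∨ (hgt c p + 1 = r ∧ ¬ HasLeftNb c p)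

def Survives (c : List ℕ) (p r : ℕ) : Prop :=
  (r = hgt c p ∧ HasLeftNb c p) ∨ Passes c p r

-- `Reaches c i j p r`: the entry of box `(i, j)` lies in row `r` of column `p` of `T(∞)`, and it
-- is the left end of no line labelled `1` ending in one of the columns `j + 1, …, p`.
inductive Reaches (c : List ℕ) (i j : ℕ) : ℕ → ℕ → Prop
  | start : Reaches c i j j i
  | bump {p r : ℕ} : Reaches c i j p r → hgt c (p + 1) = r → HasLeftNb c (p + 1) →
      Reaches c i j (p + 1) (r + 1)
  | pass {p r : ℕ} : Reaches c i j p r → Passes c (p + 1) r → Reaches c i j (p + 1) r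

namespace Reaches

variable {i j : ℕ}

lemma le_col {p r : ℕ} (h : Reaches c i j p r) : j ≤ p := by
  induction h <;> omega

lemma tinfCol (hbox : IsBox c i j) {p r : ℕ} (h : Reaches c i j p r) :
    TinfCol c p r = some (Tentry c i j) := by
  induction h with
  | start => exact tinfCol_of_le_hgt hbox.1 hbox.2.2.1 hbox.2.2.2
  | bump _ hh hL ih =>
    rw [tinfCol_eq_nextCol (by omega), nextCol, Nat.add_sub_cancel, hh, ih]
    simp [hL]
  | pass _ hP ih =>
    rw [tinfCol_eq_nextCol (by omega), nextCol, Nat.add_sub_cancel]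
    unfold Passes at hP
    split_ifs with h1 h2 <;> grind

lemma unique (hbox : IsBox c i j) {p r r' : ℕ} (h : Reaches c i j p r)
    (h' : Reaches c i j p r') : r = r' :=
  tinfCol_row_unique (h.tinfCol hbox) (h'.tinfCol hbox)

lemma exists_of_le {b r a : ℕ} (h : Reaches c i j b r) (hja : j ≤ a) (hab : a ≤ b) :
    ∃ r', Reaches c i j a r' := by
  induction h with
  | start => exact ⟨i, by rw [show a = j by omega]; exact .start⟩
  | @bump p r h hh hL ih =>
    rcases Nat.lt_or_ge p a with hpa | hpa
    · exact ⟨r + 1, by rw [show a = p + 1 by omega]; exact h.bump hh hL⟩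
    · exact ih hpa
  | @pass p r h hP ih =>
    rcases Nat.lt_or_ge p a with hpa | hpa
    · exact ⟨r, by rw [show a = p + 1 by omega]; exact h.pass hP⟩
    · exact ih hpa

lemma of_survives {p r : ℕ} (h : Reaches c i j p r) (hS : Survives c (p + 1) r) :
    ∃ r', Reaches c i j (p + 1) r' := by
  rcases hS with ⟨hh, hL⟩ | hP
  · exact ⟨r + 1, h.bump hh.symm hL⟩
  · exact ⟨r, h.pass hP⟩

lemma survives (hbox : IsBox c i j) {p r r' : ℕ} (h : Reaches c i j p r)
    (h' : Reaches c i j (p + 1) r') : Survives c (p + 1) r := by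
  cases h' with
  | start => exact absurd h.le_col (by omega)
  | bump h'' hh hL => exact Or.inl ⟨by rw [h.unique hbox h'', hh], hL⟩
  | pass h'' hP => exact Or.inr (by rwa [h.unique hbox h''])

lemma flat {a b r : ℕ} (h : Reaches c i j a r) (hab : a ≤ b)
    (hP : ∀ p, a < p → p ≤ b → Passes c p r) : Reaches c i j b r := by
  induction b, hab using Nat.le_induction with
  | base => exact h
  | succ b hab ih => exact (ih fun p h1 h2 => hP p h1 (by omega)).pass (hP _ (by omega) le_rfl)

lemma flat_bump {a b r : ℕ} (h : Reaches c i j a r) (hab : a < b)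
    (hP : ∀ p, a < p → p < b → Passes c p r) (hh : hgt c b = r) (hL : HasLeftNb c b) :
    Reaches c i j b (r + 1) := by
  obtain ⟨b, rfl⟩ : ∃ b', b = b' + 1 := ⟨b - 1, by omega⟩
  exact (h.flat (by omega) fun p h1 h2 => hP p h1 (by omega)).bump hh hL

end Reaches

lemma hgt_le_maxHgt_of_hasLeftNb {j : ℕ} (h : HasLeftNb c j) : hgt c j ≤ maxHgt c j := by
  obtain ⟨p, h1, h2, h3, -⟩ := h
  exact h3 ▸ hgt_le_maxHgt h1 h2

lemma exists_lineB_one_iff {n : ℕ} (hc : IsComposition c n) {a : ℕ} :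
    (∃ i' j', LineB c a i' j' Lab.one) ↔
      ∃ m r, TinfCol c m r = some a ∧ m + 1 ≤ c.length ∧ ¬ Survives c (m + 1) r := by
  simp only [LineB, Survives, Passes, ← hasLeftNb_iff_exists]
  constructor
  · rintro ⟨i', j', hj2, hjl, hi', hline⟩
    obtain ⟨m, rfl⟩ : ∃ m, j' = m + 1 := ⟨j' - 1, by omega⟩
    have := @hgt_le_maxHgt_of_hasLeftNb c (m + 1)
    rw [Nat.add_sub_cancel] at hline
    rcases hline with ⟨_, _, h⟩ | ⟨_, _, h⟩ | ⟨_, _, _, h⟩ | ⟨_, _, _, h⟩ <;>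
      exact ⟨m, _, h, hjl, by grind⟩
  · rintro ⟨m, r, h, hlen, hS⟩
    have hm : 1 ≤ m := Nat.pos_of_ne_zero (by rintro rfl; exact nomatch h)
    have hr : 1 ≤ r :=
      Nat.pos_of_ne_zero (by rintro rfl; rw [tinfCol_row_zero] at h; exact nomatch h)
    have hrM := tinfCol_row_le_maxHgt h
    have hpos := hgt_pos hc (show 1 ≤ m + 1 by omega) hlen
    have := @hgt_le_maxHgt_of_hasLeftNb c (m + 1)
    by_cases hbump : r = hgt c (m + 1) + 1 ∧ HasLeftNb c (m + 1)
    · refine ⟨hgt c (m + 1), m + 1, by omega, hlen, hpos, Or.inr (Or.inr (Or.inr ?_))⟩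
      rw [Nat.add_sub_cancel, ← hbump.1]
      exact ⟨this hbump.2, rfl, hbump.2, h⟩
    · refine ⟨r, m + 1, by omega, hlen, hr, ?_⟩
      rw [Nat.add_sub_cancel]
      grind

lemma rExt_iff_exists_reaches {n : ℕ} (hc : IsComposition c n) {i j : ℕ} (hbox : IsBox c i j) :
    RExt c i j ↔ ∃ r, Reaches c i j c.length r := by
  have hline := exists_lineB_one_iff hc (a := Tentry c i j)
  constructor
  · rintro ⟨-, hno⟩
    suffices ∀ p, j ≤ p → p ≤ c.length → ∃ r, Reaches c i j p r from
      this _ hbox.2.1 le_rfl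
    intro p hjp
    induction p, hjp using Nat.le_induction with
    | base => exact fun _ => ⟨i, .start⟩
    | succ p _ ih =>
      intro hp
      obtain ⟨r, h⟩ := ih (by omega)
      refine h.of_survives (by_contra fun hS => ?_)
      obtain ⟨i', j', hl⟩ := hline.2 ⟨p, r, h.tinfCol hbox, hp, hS⟩
      exact hno i' j' hl
  · rintro ⟨R, hR⟩
    refine ⟨hbox, fun i' j' hl => ?_⟩
    obtain ⟨m, r, h, hlen, hS⟩ := hline.1 ⟨i', j', hl⟩
    have hjm := le_col_of_tinfCol_eq_tentry hbox.2.2.1 h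
    obtain ⟨ρ, hρ⟩ := hR.exists_of_le hjm (by omega)
    obtain ⟨ρ', hρ'⟩ := hR.exists_of_le (a := m + 1) (by omega) hlen
    rw [tinfCol_row_unique h (hρ.tinfCol hbox)] at hS
    exact hS (hρ.survives hbox hρ')

def CanExtendDown (c : List ℕ) (u : ℕ) (col : ℕ → ℕ) (p : ℕ) : Prop :=
  2 ≤ u ∧ 1 ≤ p ∧ p < col u ∧ hgt c p = u - 1 ∧ HasLeftNb c p ∧
    ∀ q, p < q → q < col u → hgt c q < u - 1

lemma IsStair.extendDown {u cc p : ℕ} {col : ℕ → ℕ} (h : IsStair c u cc col)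
    (hp : CanExtendDown c u col p) : IsStair c (u - 1) cc (Function.update col (u - 1) p) := by
  obtain ⟨hu1, hucc, hcols, hgaps⟩ := h
  obtain ⟨hu2, hp1, hpu, hph, hpL, hpgap⟩ := hp
  have hcol : ∀ t, u ≤ t → Function.update col (u - 1) p t = col t := fun t ht =>
    Function.update_of_ne (by omega) _ _
  refine ⟨by omega, by omega, fun t ht1 ht2 => ?_, fun t ht1 ht2 => ?_⟩
  · rcases Nat.eq_or_lt_of_le ht1 with rfl | ht1
    · rw [Function.update_self]
      exact ⟨hp1, le_length_of_hgt_pos (by omega), hph, hpL⟩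
    · rw [hcol t (by omega)]
      exact hcols t (by omega) ht2
  · rcases Nat.eq_or_lt_of_le ht1 with rfl | ht1
    · rw [Function.update_self, hcol _ (by omega), show u - 1 + 1 = u by omega]
      exact ⟨hpu, hpgap⟩
    · rw [hcol t (by omega), hcol (t + 1) (by omega)]
      exact hgaps t (by omega) ht2

lemma IsStair.extendUp {u cc p : ℕ} {col : ℕ → ℕ} (h : IsStair c u cc col) (hp : col cc < p)
    (hph : hgt c p = cc + 1) (hL : HasLeftNb c p)
    (hgap : ∀ q, col cc < q → q < p → hgt c q < cc) :
    IsStair c u (cc + 1) (Function.update col (cc + 1) p) := by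
  obtain ⟨hu1, hucc, hcols, hgaps⟩ := h
  have hcol : ∀ t, t ≤ cc → Function.update col (cc + 1) p t = col t := fun t ht =>
    Function.update_of_ne (by omega) _ _
  refine ⟨hu1, by omega, fun t ht1 ht2 => ?_, fun t ht1 ht2 => ?_⟩
  · rcases Nat.eq_or_lt_of_le ht2 with rfl | ht2
    · rw [Function.update_self]
      exact ⟨by omega, le_length_of_hgt_pos (by omega), hph, hL⟩
    · rw [hcol t (by omega)]
      exact hcols t ht1 (by omega)
  · rcases Nat.eq_or_lt_of_le (Nat.le_of_lt_succ ht2) with rfl | ht2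
    · rw [Function.update_self, hcol _ le_rfl]
      exact ⟨hp, hgap⟩
    · rw [hcol t (by omega), hcol (t + 1) (by omega)]
      exact hgaps t ht1 ht2

lemma IsMaxStair.not_canExtendDown {u cc p : ℕ} {col : ℕ → ℕ} (h : IsMaxStair c u cc col) :
    ¬ CanExtendDown c u col p := fun hp => by
  have hu2 : 2 ≤ u := hp.1
  exact h.2 ⟨u - 1, cc, _, h.1.extendDown hp, by omega, le_rfl, Or.inl (by omega),
    fun t ht _ => Function.update_of_ne (by omega) _ _⟩

lemma IsStair.rExtStair {u cc : ℕ} {col : ℕ → ℕ} (h : IsStair c u cc col)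
    (hright : ∀ q, col cc < q → q ≤ c.length → hgt c q < cc)
    (hdown : ∀ p, ¬ CanExtendDown c u col p) : RExtStair c u cc col := by
  refine ⟨⟨h, ?_⟩, hright⟩
  obtain ⟨hu1, hucc, -, -⟩ := h
  rintro ⟨u', cc', col', ⟨hu'1, -, hcols', hgaps'⟩, hu', hcc', hlt | hlt, hagree⟩
  · have hcolu : col' (u - 1 + 1) = col u := by
      rw [show u - 1 + 1 = u by omega]
      exact hagree u le_rfl hucc
    obtain ⟨hp1, -, hph, hpL⟩ := hcols' (u - 1) (by omega) (by omega)
    obtain ⟨hpu, hgap⟩ := hgaps' (u - 1) (by omega) (by omega)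
    rw [hcolu] at hpu hgap
    exact hdown _ ⟨by omega, hp1, hpu, hph, hpL, hgap⟩
  · obtain ⟨-, hlen, hh, -⟩ := hcols' (cc + 1) (by omega) (by omega)
    have hlt' := (hgaps' cc (by omega) (by omega)).1
    rw [hagree cc hucc le_rfl] at hlt'
    have := hright _ hlt' hlen
    omega

lemma exists_rExtStair_of_isStair {d u : ℕ} {col : ℕ → ℕ} (h : IsStair c u d col)
    (hright : ∀ q, col d < q → q ≤ c.length → hgt c q < d) :
    ∃ u' col', RExtStair c u' d col' := by
  induction u using Nat.strong_induction_on generalizing col with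
  | _ u ih =>
    by_cases hdown : ∃ p, CanExtendDown c u col p
    · obtain ⟨p, hp⟩ := hdown
      have hu2 : 2 ≤ u := hp.1
      have hud := h.2.1
      refine ih (u - 1) (by omega) (h.extendDown hp) ?_
      rwa [Function.update_of_ne (by omega)]
    · exact ⟨u, col, h.rExtStair hright (not_exists.1 hdown)⟩

lemma exists_rExtStair {d p : ℕ} (hd : 1 ≤ d) (hp : p ≤ c.length) (hph : hgt c p = d)
    (hL : HasLeftNb c p) (hright : ∀ q, p < q → q ≤ c.length → hgt c q ≤ d) :
    ∃ u col, RExtStair c u d col := by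
  obtain ⟨C, hpC, hC, hCh, hlast⟩ := exists_last_of_le (P := fun q => hgt c q = d) hph hp
  have hCL : HasLeftNb c C := hL.of_le hpC (by rw [hCh, hph])
  refine exists_rExtStair_of_isStair (u := d) (col := fun _ => C)
    ⟨hd, le_rfl, fun t ht1 ht2 => ?_, fun t ht1 ht2 => by omega⟩ fun q hq hql => ?_
  · obtain rfl : t = d := by omega
    exact ⟨show 1 ≤ C by obtain ⟨k, hk, hkp, -⟩ := hL; omega, hC, hCh, hCL⟩
  · have := hright q (by omega) hql
    have := hlast q hq hql
    omega

lemma stairBoxCol_spec {u cu p : ℕ} (hp : p < cu) (hu : u ≤ hgt c p) :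
    p ≤ stairBoxCol c u cu ∧ stairBoxCol c u cu < cu ∧ u ≤ hgt c (stairBoxCol c u cu) ∧
      ∀ k, stairBoxCol c u cu < k → k < cu → hgt c k < u := by
  have hbdd : BddAbove {j | j < cu ∧ u ≤ hgt c j} := ⟨cu, fun x hx => hx.1.le⟩
  have hne : ({j | j < cu ∧ u ≤ hgt c j} : Set ℕ).Nonempty := ⟨p, hp, hu⟩
  have hmem := Nat.sSup_mem hne hbdd
  refine ⟨le_csSup hbdd ⟨hp, hu⟩, hmem.1, hmem.2, fun k hk hkc => ?_⟩
  by_contra hku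
  have := le_csSup hbdd ⟨hkc, not_lt.1 hku⟩
  exact absurd hk (not_lt.2 this)

lemma stairBoxCol_eq {u cu j : ℕ} (hj : j < cu) (hu : u ≤ hgt c j)
    (hbetween : ∀ k, j < k → k < cu → hgt c k < u) : stairBoxCol c u cu = j := by
  obtain ⟨hjq, -, hqu, -⟩ := stairBoxCol_spec hj hu
  by_contra hne
  have := hbetween _ (by omega) (stairBoxCol_spec hj hu).2.1
  omega

lemma IsMaxStair.passes_of_lt {n : ℕ} (hc : IsComposition c n) {u cc q p : ℕ}
    {col : ℕ → ℕ} (hms : IsMaxStair c u cc col)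
    (hbetween : ∀ k, q < k → k < col u → hgt c k < u)
    (hqp : q < p) (hpu : p < col u) : Passes c p u := by
  have hculen := (hms.1.2.2.1 u le_rfl hms.1.2.1).2.1
  have hpos := hgt_pos hc (show 1 ≤ p by omega) (show p ≤ c.length by omega)
  have hpu' := hbetween p hqp hpu
  by_cases h2 : hgt c p + 2 ≤ u
  · exact Or.inl h2
  refine Or.inr ⟨by omega, fun hL => ?_⟩
  obtain ⟨p', hpp', hp'u, hp'h, hlast⟩ := exists_last_of_le (P := fun k => hgt c k = u - 1)
    (show hgt c p = u - 1 by omega) (show p ≤ col u - 1 by omega)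
  refine hms.not_canExtendDown ⟨by omega, by omega, by omega, hp'h,
    hL.of_le hpp' (by omega), fun k hk hku => ?_⟩
  have := hbetween k (by omega) hku
  have := hlast k hk (by omega)
  omega

theorem IsMaxStair.rExt_stairBox {n : ℕ} (hc : IsComposition c n) {u cc : ℕ} {col : ℕ → ℕ}
    (hms : IsMaxStair c u cc col) (hright : ∀ q, col cc < q → q ≤ c.length → hgt c q < cc) :
    RExt c u (stairBoxCol c u (col u)) := by
  obtain ⟨hu1, hucc, hcols, hgaps⟩ := hms.1
  obtain ⟨-, hculen, hcuh, hcuL⟩ := hcols u le_rfl hucc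
  obtain ⟨p0, hp01, hp0, hp0h, -⟩ := id hcuL
  obtain ⟨hp0q, hq, hqu, hbetween⟩ := stairBoxCol_spec hp0 (show u ≤ hgt c p0 by omega)
  have hbox : IsBox c u (stairBoxCol c u (col u)) := ⟨by omega, by omega, hu1, hqu⟩
  have hlevel :
      ∀ t, u ≤ t → t ≤ cc → Reaches c u (stairBoxCol c u (col u)) (col t) (t + 1) := by
    intro t hut
    induction t, hut using Nat.le_induction with
    | base =>
      exact fun _ => Reaches.start.flat_bump hq
        (fun p h1 h2 => hms.passes_of_lt hc hbetween h1 h2) hcuh hcuL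
    | succ t hut ih =>
      intro htcc
      obtain ⟨hlt, hgap⟩ := hgaps t hut (by omega)
      obtain ⟨-, -, hh, hL⟩ := hcols (t + 1) (by omega) htcc
      exact (ih (by omega)).flat_bump hlt
        (fun p h1 h2 => Or.inl (by have := hgap p h1 h2; omega)) hh hL
  rw [rExt_iff_exists_reaches hc hbox]
  exact ⟨cc + 1, (hlevel cc hucc le_rfl).flat (hcols cc hucc le_rfl).2.1
    fun p h1 h2 => Or.inl (by have := hright p h1 h2; omega)⟩

lemma rExt_of_cAfter_lt {n : ℕ} (hc : IsComposition c n) {i j : ℕ} (hbox : IsBox c i j)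
    (hi : cAfter c j < i)
    (hstair : i = cAfter c j + 1 → ¬ ∃ u col, RExtStair c u (cAfter c j) col) :
    RExt c i j := by
  rw [rExt_iff_exists_reaches hc hbox]
  refine ⟨i, Reaches.start.flat hbox.2.1 fun p hjp hp => ?_⟩
  have hle := hgt_le_cAfter (c := c) hjp
  have hpos := hgt_pos hc (show 1 ≤ p by omega) hp
  by_cases h2 : hgt c p + 2 ≤ i
  · exact Or.inl h2
  refine Or.inr ⟨by omega, fun hL => hstair (by omega) ?_⟩
  exact exists_rExtStair (by omega) hp (by omega) hL fun q hq _ => hgt_le_cAfter (by omega)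

/-- The path of the entry of box `(i, j)` up to column `p`, arriving in row `r`: either it stayed
in row `i`, or it climbed a staircase of depth `r - 1` whose lowest column `col i` lies right of
`j`. -/
def StairTrace (c : List ℕ) (i j p r : ℕ) : Prop :=
  (r = i ∧ ∀ q, j < q → q ≤ p → Passes c q i) ∨
  (i < r ∧ ∃ col, IsStair c i (r - 1) col ∧ col (r - 1) ≤ p ∧ j < col i ∧
    (∀ q, col (r - 1) < q → q ≤ p → hgt c q < r - 1) ∧
    ∀ q, j < q → q < col i → Passes c q i)

lemma Reaches.stairTrace {i j p r : ℕ} (hi : 1 ≤ i) (h : Reaches c i j p r) :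
    StairTrace c i j p r := by
  induction h with
  | start => exact Or.inl ⟨rfl, fun q h1 h2 => absurd h1 (by omega)⟩
  | @bump p r h hh hL ih =>
    have hjp := h.le_col
    rcases ih with ⟨rfl, hpass⟩ | ⟨hir, col, hst, hcolp, hjcol, hgap, hpass⟩
    · have hlen : p + 1 ≤ c.length := le_length_of_hgt_pos (by omega)
      have hst : IsStair c r (r + 1 - 1) fun _ => p + 1 := by
        refine ⟨hi, by omega, fun t ht1 ht2 => ?_, fun t ht1 ht2 => by omega⟩
        obtain rfl : t = r := by omega
        exact ⟨show 1 ≤ p + 1 by omega, hlen, hh, hL⟩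
      refine Or.inr ⟨by omega, _, hst, le_rfl, show j < p + 1 by omega,
        fun q h1 h2 => absurd h2 (show ¬ q ≤ p + 1 by change p + 1 < q at h1; omega),
        fun q h1 h2 => hpass q h1 (show q ≤ p by change q < p + 1 at h2; omega)⟩
    · have hst' := hst.extendUp (p := p + 1) (by omega) (by rw [hh]; omega) hL
        fun q h1 h2 => hgap q h1 (by omega)
      rw [show r - 1 + 1 = r + 1 - 1 by omega] at hst'
      have hcoli : Function.update col (r + 1 - 1) (p + 1) i = col i :=
        Function.update_of_ne (by omega) _ _
      refine Or.inr ⟨by omega, _, hst', by simp, by rwa [hcoli], fun q h1 h2 => ?_, ?_⟩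
      · simp only [Function.update_self] at h1
        omega
      · rwa [hcoli]
  | @pass p r h hP ih =>
    rcases ih with ⟨rfl, hpass⟩ | ⟨hir, col, hst, hcolp, hjcol, hgap, hpass⟩
    · refine Or.inl ⟨rfl, fun q h1 h2 => ?_⟩
      rcases Nat.lt_or_ge p q with hq | hq
      · rwa [show q = p + 1 by omega]
      · exact hpass q h1 hq
    · refine Or.inr ⟨hir, col, hst, by omega, hjcol, fun q h1 h2 => ?_, hpass⟩
      rcases Nat.lt_or_ge p q with hq | hq
      · obtain rfl : q = p + 1 := by omega
        obtain ⟨hc1, -, hch, -⟩ := hst.2.2.1 (r - 1) (by omega) le_rfl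
        rcases hP with hP | ⟨hP, hnL⟩
        · omega
        · exact absurd (hasLeftNb_iff_exists.2 ⟨col (r - 1), hc1, h1, by omega⟩) hnL
      · exact hgap q h1 hq

lemma cAfter_lt_of_passes {i j : ℕ} (hbox : IsBox c i j)
    (hpass : ∀ q, j < q → q ≤ c.length → Passes c q i) :
    cAfter c j < hgt c j ∧ cAfter c j < i ∧
      (i = cAfter c j + 1 → ¬ ∃ u col, RExtStair c u (cAfter c j) col) := by
  obtain ⟨-, hjlen, hi1, hij⟩ := hbox
  have hlt : cAfter c j < i := by
    have := cAfter_le (c := c) (j := j) (K := i - 1) fun p h1 h2 => by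
      rcases hpass p h1 h2 with h | ⟨h, -⟩ <;> omega
    omega
  refine ⟨by omega, hlt, ?_⟩
  rintro hi ⟨u, col, ⟨⟨hu1, hud, hcols, -⟩, -⟩, hright⟩
  obtain ⟨-, hlen, hh, hL⟩ := hcols _ hud le_rfl
  rcases lt_trichotomy (col (cAfter c j)) j with hcj | hcj | hcj
  · have := hright j hcj hjlen
    omega
  · rw [hcj] at hh
    omega
  · rcases hpass _ hcj hlen with h | ⟨-, h⟩
    · omega
    · exact h hL

theorem RExt.cAfter_lt {n : ℕ} (hc : IsComposition c n) {i j : ℕ} (hbox : IsBox c i j)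
    (hni : ¬ ∃ u cc col, RExtStair c u cc col ∧ i = u ∧ j = stairBoxCol c u (col u))
    (h : RExt c i j) :
    cAfter c j < hgt c j ∧ cAfter c j < i ∧
      (i = cAfter c j + 1 → ¬ ∃ u col, RExtStair c u (cAfter c j) col) := by
  obtain ⟨R, hR⟩ := (rExt_iff_exists_reaches hc hbox).1 h
  rcases hR.stairTrace hbox.2.2.1 with
    ⟨rfl, hpass⟩ | ⟨hiR, col, hst, -, hjcol, hright, hpass⟩
  · exact cAfter_lt_of_passes hbox hpass
  obtain ⟨-, -, hi1, hij⟩ := hbox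
  refine absurd ⟨i, R - 1, col, hst.rExtStair hright fun p hp => ?_, rfl,
    (stairBoxCol_eq hjcol hij fun k h1 h2 => ?_).symm⟩ hni
  · obtain ⟨-, -, hpi, hph, hpL, hgap⟩ := hp
    rcases lt_trichotomy p j with hpj | rfl | hpj
    · have := hgap j hpj hjcol
      omega
    · omega
    · rcases hpass p hpj hpi with h | ⟨-, h⟩
      · omega
      · exact h hpL
  · rcases hpass k h1 h2 with h | ⟨h, -⟩ <;> omega

end

theorem statement15_general (n : ℕ) (c : List ℕ) (hc : IsComposition c n) :
    (∀ u cc col, IsMaxStair c u cc col → cc ≤ maxH c →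
      (∀ j', col cc < j' → j' ≤ c.length → hgt c j' < cc) →
      RExt c u (stairBoxCol c u (col u))) ∧
    (∀ i j, IsBox c i j →
      (¬ ∃ u cc col, RExtStair c u cc col ∧ i = u ∧ j = stairBoxCol c u (col u)) →
      (RExt c i j ↔
        (cAfter c j < hgt c j ∧ cAfter c j < i ∧
          (i = cAfter c j + 1 → ¬ ∃ u col, RExtStair c u (cAfter c j) col)))) :=
  ⟨fun _ _ _ hms _ hright => hms.rExt_stairBox hc hright,
    fun _ _ hbox hni => ⟨RExt.cAfter_lt hc hbox hni,
      fun ⟨_, hi, hstair⟩ => rExt_of_cAfter_lt hc hbox hi hstair⟩⟩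

/-- (i) if `S^cc` is a right extremal column staircase in `D` with
`cc` at most the maximal column height of `D`, then `b(S^cc)` is right extremal in
`D` relative to `ℓ(D)`.  (ii) the remaining right extremal boxes of `D` are exactly
the boxes of the `c^j`-lower part of each right extremal column `C_j` (the boxes of
`C_j` in rows strictly below `R_{c^j}`), except possibly the top box
`C_j ∩ R_{c^j + 1}`, which fails to be right extremal exactly when there exists a
right extremal column staircase of depth `c^j` in `D`. -/
theorem statement15 (n : ℕ) (hn : 0 < n) (c : List ℕ) (hc : IsComposition c n) :
    (∀ u cc col, IsMaxStair c u cc col → cc ≤ maxH c →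
      (∀ j', col cc < j' → j' ≤ c.length → hgt c j' < cc) →
      RExt c u (stairBoxCol c u (col u))) ∧
    (∀ i j, IsBox c i j →
      (¬ ∃ u cc col, RExtStair c u cc col ∧ i = u ∧ j = stairBoxCol c u (col u)) →
      (RExt c i j ↔
        (cAfter c j < hgt c j ∧ cAfter c j < i ∧
          (i = cAfter c j + 1 → ¬ ∃ u col, RExtStair c u (cAfter c j) col)))) :=
  statement15_general n c hc
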